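/- Let Y, Y' be independent Gaussian random variables in a separable Hilbert space H, both with mean m and trace-class covariance Σ with eigenvalues (λ_i), and σ > 0. Then E exp(−σ‖Y − Y'‖²) = Π_{i≥1}(1 + 4σλ_i)^{−1/2} = |I + 4σΣ|^{−1/2}. -/

import Mathlib

/-!
Writing `Xᵢ x = ⟪x, bᵢ⟫`, Parseval gives `exp (-σ‖x - x'‖²) = ∏ᵢ exp (-σ (Xᵢ x - Xᵢ x')²)`.
All partial products are bounded by `1`, so by dominated convergence and independence of the
coordinates both integrals can be taken factor by factor, first in `x'` and then in `x`. Each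
factor is a one-dimensional Gaussian integral: for `Y, Y'` i.i.d. `N(c, v)`,
`E exp (-σ (Y - Y')²) = (1 + 4σv)^(-1/2)`, and these factors are multipliable because `∑ v_i < ∞`.
-/

open MeasureTheory ProbabilityTheory Real Filter Finset
open scoped NNReal Topology

namespace ProbabilityTheory

variable {Ω ι 𝓧 : Type*} {mΩ : MeasurableSpace Ω} [MeasurableSpace 𝓧] {μ : Measure Ω}
  {X : ι → Ω → 𝓧} {φ : ι → 𝓧 → ℝ}

lemma iIndepFun.integral_fun_finsetProd_comp (hX : iIndepFun X μ) (mX : ∀ i, Measurable (X i))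
    (mφ : ∀ i, Measurable (φ i)) (s : Finset ι) :
    ∫ ω, ∏ i ∈ s, φ i (X i ω) ∂μ = ∏ i ∈ s, ∫ t, φ i t ∂(μ.map (X i)) := by
  have hXs := hX.precomp (g := ((↑) : s → ι)) Subtype.val_injective
  calc ∫ ω, ∏ i ∈ s, φ i (X i ω) ∂μ = ∫ ω, ∏ i : s, φ i (X i ω) ∂μ := by
        congr with ω; exact (Finset.prod_coe_sort s fun i ↦ φ i (X i ω)).symm
    _ = ∏ i : s, ∫ ω, φ i (X i ω) ∂μ :=
        hXs.integral_fun_prod_comp (fun i ↦ (mX i).aemeasurable)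
          (fun i ↦ (mφ i).aestronglyMeasurable)
    _ = ∏ i ∈ s, ∫ t, φ i t ∂(μ.map (X i)) := by
        rw [← Finset.prod_coe_sort s]
        simp_rw [integral_map (mX _).aemeasurable (mφ _).aestronglyMeasurable]

lemma iIndepFun.tendsto_prod_integral_map (hX : iIndepFun X μ) (mX : ∀ i, Measurable (X i))
    (mφ : ∀ i, Measurable (φ i)) (hφ : ∀ i x, ‖φ i x‖ ≤ 1) {F : Ω → ℝ} {u : ℕ → Finset ι}
    (hF : ∀ ω, Tendsto (fun n ↦ ∏ i ∈ u n, φ i (X i ω)) atTop (𝓝 (F ω))) :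
    Tendsto (fun n ↦ ∏ i ∈ u n, ∫ t, φ i t ∂(μ.map (X i))) atTop (𝓝 (∫ ω, F ω ∂μ)) := by
  have := hX.isProbabilityMeasure
  simp_rw [← hX.integral_fun_finsetProd_comp mX mφ]
  refine tendsto_integral_of_dominated_convergence (fun _ ↦ 1) (fun n ↦ ?_) (integrable_const 1)
    (fun n ↦ ae_of_all _ fun ω ↦ ?_) (ae_of_all _ hF)
  · exact (Finset.measurable_prod _ fun i _ ↦ (mφ i).comp (mX i)).aestronglyMeasurable
  · rw [norm_prod]
    exact Finset.prod_le_one (fun _ _ ↦ norm_nonneg _) fun i _ ↦ hφ i _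

end ProbabilityTheory

lemma Real.multipliable_one_add_rpow {ι : Type*} {c : ι → ℝ} (hc : ∀ i, 0 ≤ c i)
    (hs : Summable c) (p : ℝ) : Multipliable fun i ↦ (1 + c i) ^ p := by
  have hpos (i : ι) : 0 < 1 + c i := by linarith [hc i]
  refine Real.multipliable_of_summable_log (fun i ↦ rpow_pos_of_pos (hpos i) p) ?_
  simp_rw [Real.log_rpow (hpos _)]
  exact (Real.summable_log_one_add_of_summable hs).mul_left p

lemma HilbertBasis.hasSum_sq_inner {ι E : Type*} [NormedAddCommGroup E] [InnerProductSpace ℝ E]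
    (b : HilbertBasis ι ℝ E) (x : E) : HasSum (fun i ↦ inner ℝ x (b i) ^ 2) (‖x‖ ^ 2) := by
  simpa [← real_inner_self_eq_norm_sq, sq, real_inner_comm x] using b.hasSum_inner_mul_inner x x

lemma integral_exp_neg_mul_sub_sq_gaussianReal {σ : ℝ} (hσ : 0 ≤ σ) (c : ℝ) (v : ℝ≥0) (t : ℝ) :
    ∫ s, exp (-(σ * (t - s) ^ 2)) ∂gaussianReal c v
      = (√(1 + 2 * σ * v))⁻¹ * exp (-(σ / (1 + 2 * σ * v) * (t - c) ^ 2)) := by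
  rcases eq_or_ne v 0 with rfl | hv
  · simp [integral_dirac]
  have hv' : 0 < (v : ℝ) := by positivity
  have hd : 0 < 1 + 2 * σ * v := by positivity
  set A := (1 + 2 * σ * v) / (2 * v) with hA
  set B := (c + 2 * σ * v * t) / (1 + 2 * σ * v) with hB
  have h_complete_square (s : ℝ) : gaussianPDFReal c v s • exp (-(σ * (t - s) ^ 2))
      = (√(2 * π * v))⁻¹ * exp (-(σ / (1 + 2 * σ * v) * (t - c) ^ 2)) * exp (-A * (s - B) ^ 2) := by
    simp only [gaussianPDFReal, smul_eq_mul, mul_assoc, ← exp_add]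
    congr 2
    rw [hA, hB]
    field_simp
    ring
  rw [integral_gaussianReal_eq_integral_smul hv]
  simp_rw [h_complete_square]
  rw [integral_const_mul, integral_sub_right_eq_self (fun s ↦ exp (-A * s ^ 2)) B,
    integral_gaussian, mul_right_comm, hA]
  congr 1
  rw [← sqrt_inv, ← sqrt_inv, ← sqrt_mul (by positivity)]
  congr 1
  field_simp

lemma integral_integral_exp_neg_mul_sub_sq_gaussianReal {σ : ℝ} (hσ : 0 ≤ σ) (c : ℝ)
    (v : ℝ≥0) :
    ∫ t, ∫ s, exp (-(σ * (t - s) ^ 2)) ∂gaussianReal c v ∂gaussianReal c v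
      = (1 + 4 * σ * v) ^ (-(1 : ℝ) / 2) := by
  have hd : 0 < 1 + 2 * σ * v := by positivity
  set σ' := σ / (1 + 2 * σ * v) with hσ'
  simp_rw [integral_exp_neg_mul_sub_sq_gaussianReal hσ, ← hσ', sub_sq_comm _ c]
  rw [integral_const_mul, integral_exp_neg_mul_sub_sq_gaussianReal (by positivity), sub_self]
  have h_mul : (1 + 2 * σ * v) * (1 + 2 * σ' * v) = 1 + 4 * σ * v := by
    rw [hσ']
    field_simp
    ring
  rw [zero_pow two_ne_zero, mul_zero, neg_zero, exp_zero, mul_one, ← mul_inv,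
    ← sqrt_mul hd.le, h_mul, sqrt_eq_rpow, ← rpow_neg (by positivity), neg_div]

lemma measurable_integral_exp_neg_mul_sub_sq_gaussianReal {σ : ℝ} (hσ : 0 ≤ σ) (c : ℝ)
    (v : ℝ≥0) : Measurable fun t ↦ ∫ s, exp (-(σ * (t - s) ^ 2)) ∂gaussianReal c v := by
  simp_rw [integral_exp_neg_mul_sub_sq_gaussianReal hσ]
  fun_prop

lemma norm_exp_neg_mul_sq_le_one {σ : ℝ} (hσ : 0 ≤ σ) (x : ℝ) : ‖exp (-(σ * x ^ 2))‖ ≤ 1 := by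
  rw [norm_of_nonneg (exp_nonneg _), exp_le_one_iff, neg_nonpos]
  positivity

lemma norm_integral_exp_neg_mul_sub_sq_le_one {σ : ℝ} (hσ : 0 ≤ σ) (ν : Measure ℝ)
    [IsProbabilityMeasure ν] (t : ℝ) : ‖∫ s, exp (-(σ * (t - s) ^ 2)) ∂ν‖ ≤ 1 := by
  simpa using norm_integral_le_of_norm_le_const (μ := ν)
    (ae_of_all _ fun s ↦ norm_exp_neg_mul_sq_le_one hσ (t - s))

theorem gaussian_kernel_embedding_norm_sq_general
    {H : Type*} [NormedAddCommGroup H] [InnerProductSpace ℝ H]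
    [MeasurableSpace H] [BorelSpace H]
    (b : HilbertBasis ℕ ℝ H) (m : H) (ev : ℕ → ℝ≥0)
    (hev : Summable fun i => (ev i : ℝ))
    (μ : Measure H) [IsProbabilityMeasure μ]
    (hGauss : ∀ i, Measure.map (fun x => (inner ℝ x (b i) : ℝ)) μ
        = gaussianReal (inner ℝ m (b i)) (ev i))
    (hIndep : iIndepFun (m := fun _ => Real.measurableSpace)
        (fun i => fun x : H => (inner ℝ x (b i) : ℝ)) μ)
    (σ : ℝ) (hσ : 0 < σ) :
    ∫ x, ∫ x', Real.exp (-σ * ‖x - x'‖ ^ 2) ∂μ ∂μ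
      = ∏' i, ((1 : ℝ) + 4 * σ * (ev i : ℝ)) ^ (-(1 : ℝ) / 2) := by
  have mX (i : ℕ) : Measurable fun x : H ↦ inner ℝ x (b i) := by fun_prop
  have h_inner (x : H) : Tendsto (fun N ↦ ∏ i ∈ range N,
      ∫ s, exp (-(σ * (inner ℝ x (b i) - s) ^ 2)) ∂gaussianReal (inner ℝ m (b i)) (ev i))
      atTop (𝓝 (∫ x', exp (-σ * ‖x - x'‖ ^ 2) ∂μ)) := by
    simp_rw [← hGauss]
    refine hIndep.tendsto_prod_integral_map mX (fun i ↦ by fun_prop)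
      (fun i s ↦ norm_exp_neg_mul_sq_le_one hσ.le _) fun x' ↦ ?_
    simpa [inner_sub_left] using
      ((b.hasSum_sq_inner (x - x')).mul_left (-σ)).rexp.tendsto_prod_nat
  have h_outer := hIndep.tendsto_prod_integral_map mX
    (fun i ↦ measurable_integral_exp_neg_mul_sub_sq_gaussianReal hσ.le _ _)
    (fun i ↦ norm_integral_exp_neg_mul_sub_sq_le_one hσ.le _) h_inner
  simp_rw [hGauss, integral_integral_exp_neg_mul_sub_sq_gaussianReal hσ.le] at h_outer
  exact tendsto_nhds_unique h_outer (Real.multipliable_one_add_rpow (fun i ↦ by positivity)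
    (hev.mul_left (4 * σ)) _).hasProd.tendsto_prod_nat

/-- Squared RKHS norm of the Gaussian-kernel mean embedding of `N(m, Σ)`:
if `Y, Y'` are i.i.d. Gaussian in `H` with mean `m` and covariance diagonalized
in the basis `b` with eigenvalues `ev`, then
`E exp(−σ‖Y − Y'‖²) = ∏ᵢ (1 + 4σλᵢ)^{−1/2}`. -/
theorem gaussian_kernel_embedding_norm_sq
    {H : Type*} [NormedAddCommGroup H] [InnerProductSpace ℝ H] [CompleteSpace H]
    [MeasurableSpace H] [BorelSpace H]
    (b : HilbertBasis ℕ ℝ H) (m : H) (ev : ℕ → ℝ≥0)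
    (hev : Summable fun i => (ev i : ℝ))
    (μ : Measure H) [IsProbabilityMeasure μ]
    (hGauss : ∀ i, Measure.map (fun x => (inner ℝ x (b i) : ℝ)) μ
        = gaussianReal (inner ℝ m (b i)) (ev i))
    (hIndep : iIndepFun (m := fun _ => Real.measurableSpace)
        (fun i => fun x : H => (inner ℝ x (b i) : ℝ)) μ)
    (σ : ℝ) (hσ : 0 < σ) :
    ∫ x, ∫ x', Real.exp (-σ * ‖x - x'‖ ^ 2) ∂μ ∂μ
      = ∏' i, ((1 : ℝ) + 4 * σ * (ev i : ℝ)) ^ (-(1 : ℝ) / 2) :=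
  gaussian_kernel_embedding_norm_sq_general b m ev hev μ hGauss hIndep σ hσ
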